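/- Let n ≥ 1, θ ∈ (1/2, 1], and let Ω ⊂ ℝ^n be a bounded open set. Then there exists a constant C, depending only on n, θ and Ω, such that for every index i ∈ {1, …, n}, all f, w ∈ C¹(Ω̄) and every φ ∈ C¹_c(Ω), |∫_Ω ∂_i f(x) w(x) φ(x) dx| ≤ C ‖f‖_{C^{0,θ}} ‖w‖_{C^{0,θ}} ‖φ‖_{C^{0,θ}}. In particular, the bound is independent of the derivatives of f, w and φ. -/

import Mathlib

/-!
Integrating by parts, `∫_Ω ∂ᵢf · wφ = -∫ f · ∂ᵢψ` with `ψ = wφ`, and `f` may be replaced by a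
bounded `θ`-Hölder extension `g` to all of `ℝⁿ`. Then `F t = ∫ g(x) ψ(x + t eᵢ)` has
`F'(0) = ∫ g ∂ᵢψ`, and its second differences
`F(2u) - 2F(u) + F(0) = ∫ (g(x - u eᵢ) - g(x)) (ψ(x + u eᵢ) - ψ(x))` are `O(u^{2θ})`. Since
`2θ > 1`, the dyadic slopes `(F(2⁻ᵐ) - F(0)) 2ᵐ` converge geometrically to `F'(0)`, which is
therefore bounded by `|F(1) - F(0)|` plus a geometric series; neither involves a derivative.
-/

open MeasureTheory Filter Topology Metric

noncomputable section

/-- Partial derivative of `f : ℝⁿ → ℝ` in the `i`-th coordinate direction. -/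
def pd {n : ℕ} (i : Fin n) (f : EuclideanSpace ℝ (Fin n) → ℝ)
    (x : EuclideanSpace ℝ (Fin n)) : ℝ :=
  fderiv ℝ f x (EuclideanSpace.single i 1)

section Holder

variable {X : Type*} [PseudoMetricSpace X] {θ L : ℝ}

lemma dist_rpow_triangle (hθ0 : 0 ≤ θ) (hθ1 : θ ≤ 1) (x y z : X) :
    dist x z ^ θ ≤ dist x y ^ θ + dist y z ^ θ :=
  (Real.rpow_le_rpow dist_nonneg (dist_triangle x y z) hθ0).trans
    (Real.rpow_add_le_add_rpow dist_nonneg dist_nonneg hθ0 hθ1)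

lemma nonneg_of_abs_sub_le_mul_dist_rpow {Y : Type*} [MetricSpace Y] {f : Y → ℝ} {x y : Y}
    (hxy : x ≠ y) (h : |f x - f y| ≤ L * dist x y ^ θ) : 0 ≤ L :=
  nonneg_of_mul_nonneg_left ((abs_nonneg _).trans h) (Real.rpow_pos_of_pos (dist_pos.2 hxy) θ)

lemma continuous_of_abs_sub_le_mul_dist_rpow {g : X → ℝ} (hθ : 0 < θ)
    (hg : ∀ x y, |g x - g y| ≤ L * dist x y ^ θ) : Continuous g := by
  refine continuous_iff_continuousAt.2 fun x => tendsto_iff_dist_tendsto_zero.2 ?_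
  have hlim : Tendsto (fun y => L * dist y x ^ θ) (𝓝 x) (𝓝 (L * dist x x ^ θ)) :=
    (((continuous_id.dist continuous_const).rpow_const fun _ => Or.inr hθ.le).const_mul L).tendsto x
  rw [dist_self, Real.zero_rpow hθ.ne', mul_zero] at hlim
  exact squeeze_zero (fun _ => dist_nonneg) (fun y => hg y x) hlim

/-- McShane's formula `g x = ⨅ y ∈ s, f y + L * dist x y ^ θ`: for `θ ≤ 1`, `dist ^ θ` is again
a pseudometric, for which `f` is `L`-Lipschitz. -/
lemma exists_holder_extension {f : X → ℝ} {s : Set X} (hθ0 : 0 < θ) (hθ1 : θ ≤ 1) (hL : 0 ≤ L)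
    (hf : ∀ x ∈ s, ∀ y ∈ s, |f x - f y| ≤ L * dist x y ^ θ) :
    ∃ g : X → ℝ, (∀ x y, |g x - g y| ≤ L * dist x y ^ θ) ∧ Set.EqOn f g s := by
  rcases s.eq_empty_or_nonempty with rfl | ⟨z, hz⟩
  · exact ⟨0, fun x y => by simp only [Pi.zero_apply, sub_zero, abs_zero]; positivity,
      Set.eqOn_empty _ _⟩
  have : Nonempty s := ⟨⟨z, hz⟩⟩
  set g : X → ℝ := fun x => ⨅ y : s, f y + L * dist x y ^ θ
  have hbdd : ∀ x : X, BddBelow (Set.range fun y : s => f y + L * dist x y ^ θ) := by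
    refine fun x => ⟨f z - L * dist x z ^ θ, ?_⟩
    rintro _ ⟨y, rfl⟩
    have h1 := (abs_le.1 (hf z hz y y.2)).2
    have h2 := mul_le_mul_of_nonneg_left (dist_rpow_triangle hθ0.le hθ1 z x y) hL
    rw [dist_comm z x] at h2
    linarith
  have hg_le : ∀ x x', g x ≤ g x' + L * dist x x' ^ θ := by
    refine fun x x' => sub_le_iff_le_add.1 (le_ciInf fun y => sub_le_iff_le_add.2 ?_)
    have h1 := mul_le_mul_of_nonneg_left (dist_rpow_triangle hθ0.le hθ1 x x' y) hL
    linarith [ciInf_le (hbdd x) y]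
  refine ⟨g, fun x y => abs_sub_le_iff.2 ⟨?_, ?_⟩, fun x hx => le_antisymm ?_ ?_⟩
  · linarith [hg_le x y]
  · linarith [dist_comm y x ▸ hg_le y x]
  · exact le_ciInf fun y => by linarith [(abs_le.1 (hf x hx y y.2)).2]
  · simpa [Real.zero_rpow hθ0.ne'] using ciInf_le (hbdd x) ⟨x, hx⟩

lemma exists_bounded_holder_extension {f : X → ℝ} {s : Set X} {A : ℝ} (hs : s.Nonempty)
    (hθ0 : 0 < θ) (hθ1 : θ ≤ 1) (hL : 0 ≤ L) (hfA : ∀ x ∈ s, |f x| ≤ A)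
    (hf : ∀ x ∈ s, ∀ y ∈ s, |f x - f y| ≤ L * dist x y ^ θ) :
    ∃ g : X → ℝ, (∀ x, |g x| ≤ A) ∧ (∀ x y, |g x - g y| ≤ L * dist x y ^ θ) ∧
      Set.EqOn f g s := by
  obtain ⟨g, hgL, hfg⟩ := exists_holder_extension hθ0 hθ1 hL hf
  have hA : 0 ≤ A := (abs_nonneg _).trans (hfA _ hs.some_mem)
  have hAA : -A ≤ A := by linarith
  refine ⟨fun x => Set.projIcc (-A) A hAA (g x),
    fun x => abs_le.2 (Set.projIcc (-A) A hAA (g x)).2,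
    fun x y => (Set.abs_projIcc_sub_projIcc hAA).trans (hgL x y), fun x hx => ?_⟩
  simp only [← hfg hx, Set.projIcc_of_mem hAA (abs_le.1 (hfA x hx))]

lemma abs_mul_sub_mul_le_of_holder {f g : X → ℝ} {A B Lf Lg : ℝ} (hfA : ∀ x, |f x| ≤ A)
    (hgB : ∀ x, |g x| ≤ B) (hf : ∀ x y, |f x - f y| ≤ Lf * dist x y ^ θ)
    (hg : ∀ x y, |g x - g y| ≤ Lg * dist x y ^ θ) (x y : X) :
    |f x * g x - f y * g y| ≤ (A * Lg + B * Lf) * dist x y ^ θ := by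
  have h1 : |f x * (g x - g y)| ≤ A * (Lg * dist x y ^ θ) := by
    rw [abs_mul]
    exact mul_le_mul (hfA x) (hg x y) (abs_nonneg _) ((abs_nonneg _).trans (hfA x))
  have h2 : |(f x - f y) * g y| ≤ Lf * dist x y ^ θ * B := by
    rw [abs_mul]
    exact mul_le_mul (hf x y) (hgB y) (abs_nonneg _) ((abs_nonneg _).trans (hf x y))
  calc |f x * g x - f y * g y| = |f x * (g x - g y) + (f x - f y) * g y| := by ring_nf
    _ ≤ _ := (abs_add_le _ _).trans (add_le_add h1 h2)
    _ = _ := by ring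

end Holder

lemma abs_deriv_sub_sub_le_of_second_difference {F : ℝ → ℝ} {d K α : ℝ} (hF : HasDerivAt F d 0)
    (hα : 0 < α) (h : ∀ u, 0 < u → u ≤ 1 → |F (2 * u) - 2 * F u + F 0| ≤ K * u ^ (1 + α)) :
    |d - (F 1 - F 0)| ≤ K / (2 * (2 ^ α - 1)) := by
  have h2α : 1 < (2 : ℝ) ^ α := Real.one_lt_rpow one_lt_two hα
  set r : ℝ := ((2 : ℝ) ^ α)⁻¹
  have hr1 : r < 1 := inv_lt_one_of_one_lt₀ h2α
  set u : ℕ → ℝ := fun m => ((2 : ℝ) ^ m)⁻¹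
  have hu : ∀ m, 0 < u m := fun m => by positivity
  have hu_succ : ∀ m, u m = 2 * u (m + 1) := fun m => by simp only [u, pow_succ]; field_simp
  have hu_rpow : ∀ m, u m ^ α = r ^ m := fun m => by
    rw [Real.inv_rpow (by positivity), ← Real.rpow_pow_comm (by norm_num), inv_pow]
  set Q : ℕ → ℝ := fun m => slope F 0 (u m)
  have hQ : Tendsto Q atTop (𝓝 d) := by
    refine hF.tendsto_slope.comp (tendsto_nhdsWithin_of_tendsto_nhds_of_eventually_within _ ?_
      (Eventually.of_forall fun m => (hu m).ne'))
    exact tendsto_inv_atTop_zero.comp (tendsto_pow_atTop_atTop_of_one_lt one_lt_two)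
  have hstep : ∀ m, dist (Q m) (Q (m + 1)) ≤ K * r / 2 * r ^ m := by
    intro m
    have hv := hu (m + 1)
    have hQQ : Q m - Q (m + 1) =
        (F (2 * u (m + 1)) - 2 * F (u (m + 1)) + F 0) / (2 * u (m + 1)) := by
      simp only [Q, slope_def_field, sub_zero, hu_succ m]
      field_simp
      ring
    have hv2 : 0 < 2 * u (m + 1) := mul_pos two_pos hv
    rw [Real.dist_eq, hQQ, abs_div, abs_of_pos hv2, div_le_iff₀ hv2]
    calc _ ≤ K * u (m + 1) ^ (1 + α) := h _ hv (inv_le_one_of_one_le₀ (one_le_pow₀ one_le_two))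
      _ = K * r / 2 * r ^ m * (2 * u (m + 1)) := by
        rw [Real.rpow_add hv, Real.rpow_one, hu_rpow, pow_succ]
        ring
  have hlim := dist_le_of_le_geometric_of_tendsto₀ r (K * r / 2) hr1 hstep hQ
  have hQ0 : Q 0 = F 1 - F 0 := by simp [Q, u, slope_def_field]
  rw [hQ0, dist_comm, Real.dist_eq] at hlim
  convert hlim using 1
  simp only [r]
  field_simp

lemma abs_integral_le_of_eq_zero_off {α : Type*} [MeasurableSpace α] {μ : Measure α} {f : α → ℝ}
    {B : Set α} {C : ℝ} (hB : μ B < ⊤) (hf0 : ∀ x ∉ B, f x = 0) (hfC : ∀ x ∈ B, |f x| ≤ C) :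
    |∫ x, f x ∂μ| ≤ C * μ.real B := by
  rw [← setIntegral_eq_integral_of_forall_compl_eq_zero hf0]
  exact norm_setIntegral_le_of_norm_le_const (f := f) hB hfC

lemma ContinuousOn.integrable_mul_of_tsupport_subset {X : Type*} [TopologicalSpace X]
    [MeasurableSpace X] [OpensMeasurableSpace X] {μ : Measure X} [IsFiniteMeasureOnCompacts μ]
    {f χ : X → ℝ} {U : Set X} (hf : ContinuousOn f U) (hU : IsOpen U) (hχ : Continuous χ)
    (hχs : HasCompactSupport χ) (hχU : tsupport χ ⊆ U) : Integrable (fun x => f x * χ x) μ :=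
  ((hf.mul hχ.continuousOn).continuous_of_tsupport_subset hU
    (tsupport_mul_subset_right.trans hχU)).integrable_of_hasCompactSupport hχs.mul_left

lemma ContDiffOn.contDiff_of_tsupport_subset {E F : Type*} [NormedAddCommGroup E]
    [NormedSpace ℝ E] [NormedAddCommGroup F] [NormedSpace ℝ F] {f : E → F} {U : Set E}
    {n : WithTop ℕ∞} (hf : ContDiffOn ℝ n f U) (hU : IsOpen U) (hfU : tsupport f ⊆ U) :
    ContDiff ℝ n f :=
  contMDiff_iff_contDiff.1 <| contMDiff_of_tsupport fun _ hx =>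
    contMDiffAt_iff_contDiffAt.2 <| hf.contDiffAt (hU.mem_nhds (hfU hx))

lemma comp_add_eq_zero_of_notMem_cthickening {E M : Type*} [NormedAddCommGroup E] [Zero M]
    {ψ : E → M}
    {K : Set E} (hψK : tsupport ψ ⊆ K) {h x : E} (hh : ‖h‖ ≤ 1) (hx : x ∉ cthickening 1 K) :
    ψ (x + h) = 0 :=
  image_eq_zero_of_notMem_tsupport fun hmem =>
    hx (mem_cthickening_of_dist_le x _ 1 K (hψK hmem) (by rwa [dist_self_add_right]))

lemma integral_mul_second_difference {G : Type*} [AddCommGroup G] [TopologicalSpace G]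
    [IsTopologicalAddGroup G] [MeasurableSpace G] [BorelSpace G] {μ : Measure G}
    [μ.IsAddRightInvariant] [IsFiniteMeasureOnCompacts μ] {g ψ : G → ℝ} (hg : Continuous g)
    (hψ : Continuous ψ) (hψs : HasCompactSupport ψ) (h : G) :
    ∫ x, g x * ψ (x + (h + h)) ∂μ - 2 * ∫ x, g x * ψ (x + h) ∂μ + ∫ x, g x * ψ x ∂μ =
      ∫ x, (g (x - h) - g x) * (ψ (x + h) - ψ x) ∂μ := by
  have hI : ∀ f : G → ℝ, Continuous f → ∀ b, Integrable (fun x => f x * ψ (x + b)) μ :=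
    fun f hf b => (hf.mul (hψ.comp (continuous_add_const b))).integrable_of_hasCompactSupport
      (hψs.comp_homeomorph (Homeomorph.addRight b)).mul_left
  have hI0 : ∀ f : G → ℝ, Continuous f → Integrable (fun x => f x * ψ x) μ :=
    fun f hf => by simpa using hI f hf 0
  have hg' : Continuous fun x => g (x - h) := hg.comp (continuous_sub_right h)
  have e1 : ∫ x, g x * ψ (x + (h + h)) ∂μ = ∫ x, g (x - h) * ψ (x + h) ∂μ := by
    rw [← integral_sub_right_eq_self _ h]
    simp only [← add_assoc, sub_add_cancel]
  have e2 : ∫ x, g x * ψ (x + h) ∂μ = ∫ x, g (x - h) * ψ x ∂μ := by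
    rw [← integral_sub_right_eq_self _ h]
    simp only [sub_add_cancel]
  calc _ = (∫ x, g (x - h) * ψ (x + h) ∂μ - ∫ x, g x * ψ (x + h) ∂μ) -
        (∫ x, g (x - h) * ψ x ∂μ - ∫ x, g x * ψ x ∂μ) := by rw [e1, ← e2]; ring
    _ = ∫ x, ((g (x - h) * ψ (x + h) - g x * ψ (x + h)) - (g (x - h) * ψ x - g x * ψ x)) ∂μ := by
      rw [← integral_sub (hI _ hg' h) (hI _ hg h), ← integral_sub (hI0 _ hg') (hI0 _ hg)]
      exact (integral_sub ((hI _ hg' h).sub (hI _ hg h)) ((hI0 _ hg').sub (hI0 _ hg))).symm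
    _ = _ := by congr 1; ext x; ring

section Translation

variable {E : Type*} [NormedAddCommGroup E] [NormedSpace ℝ E] [FiniteDimensional ℝ E]
  [MeasurableSpace E] [BorelSpace E] {μ : Measure E} [μ.IsAddHaarMeasure]

lemma setIntegral_fderiv_mul_eq_neg {f ψ : E → ℝ} {U : Set E} (hU : IsOpen U)
    (hf : ContDiffOn ℝ 1 f U) (hψ : ContDiff ℝ 1 ψ) (hψs : HasCompactSupport ψ)
    (hψU : tsupport ψ ⊆ U) (v : E) :
    ∫ x in U, fderiv ℝ f x v * ψ x ∂μ = -∫ x in U, f x * fderiv ℝ ψ x v ∂μ := by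
  have hψ' : Continuous fun x => fderiv ℝ ψ x v :=
    (hψ.continuous_fderiv one_ne_zero).clm_apply continuous_const
  have hψ'U : tsupport (fun x => fderiv ℝ ψ x v) ⊆ U :=
    (tsupport_fderiv_apply_subset ℝ v).trans hψU
  have hf' : ContinuousOn (fun x => fderiv ℝ f x v) U :=
    ((hf.continuousOn_fderiv_of_isOpen hU le_rfl).clm_apply continuousOn_const)
  rw [setIntegral_eq_integral_of_forall_compl_eq_zero fun x hx => by
      rw [image_eq_zero_of_notMem_tsupport fun h => hx (hψU h), mul_zero],
    setIntegral_eq_integral_of_forall_compl_eq_zero fun x hx => by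
      rw [image_eq_zero_of_notMem_tsupport (f := fun x => fderiv ℝ ψ x v) fun h => hx (hψ'U h),
        mul_zero],
    integral_mul_fderiv_eq_neg_fderiv_mul_of_integrable
      (hf'.integrable_mul_of_tsupport_subset hU hψ.continuous hψs hψU)
      (hf.continuousOn.integrable_mul_of_tsupport_subset hU hψ' (hψs.fderiv_apply ℝ v) hψ'U)
      (hf.continuousOn.integrable_mul_of_tsupport_subset hU hψ.continuous hψs hψU)
      (fun x hx => (hf.differentiableOn one_ne_zero).differentiableAt (hU.mem_nhds (hψU hx)))
      (fun x _ => hψ.differentiable one_ne_zero x), neg_neg]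

lemma hasDerivAt_integral_mul_comp_add_smul {g ψ : E → ℝ} (hg : Continuous g)
    (hψ : ContDiff ℝ 1 ψ) (hψs : HasCompactSupport ψ) (e : E) :
    HasDerivAt (fun t : ℝ => ∫ x, g x * ψ (x + t • e) ∂μ) (∫ x, g x * fderiv ℝ ψ x e ∂μ) 0 := by
  set S := cthickening ‖e‖ (tsupport ψ)
  have hS : IsCompact S := hψs.isCompact.cthickening
  obtain ⟨A, hA⟩ := hS.exists_bound_of_continuousOn hg.continuousOn
  obtain ⟨M, hM⟩ := (hψs.fderiv ℝ).exists_bound_of_continuous (hψ.continuous_fderiv one_ne_zero)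
  have hψ_shift : ∀ t : ℝ, Continuous fun x => ψ (x + t • e) :=
    fun t => hψ.continuous.comp (continuous_add_const _)
  have hbound : ∀ x, ∀ t ∈ ball (0 : ℝ) 1,
      ‖g x * fderiv ℝ ψ (x + t • e) e‖ ≤ S.indicator (fun _ => A * (M * ‖e‖)) x := by
    intro x t ht
    by_cases hx : x ∈ S
    · rw [Set.indicator_of_mem hx, norm_mul]
      exact mul_le_mul (hA x hx) (((fderiv ℝ ψ _).le_opNorm e).trans
        (mul_le_mul_of_nonneg_right (hM _) (norm_nonneg e))) (norm_nonneg _)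
        ((norm_nonneg _).trans (hA x hx))
    · have ht1 : |t| ≤ 1 := by simpa using (mem_ball_zero_iff.1 ht).le
      have hx' : x + t • e ∉ tsupport (fderiv ℝ ψ) := fun h => hx <|
        mem_cthickening_of_dist_le x _ _ _ (tsupport_fderiv_subset ℝ h) <| by
          rw [dist_self_add_right, norm_smul, Real.norm_eq_abs]
          exact mul_le_of_le_one_left (norm_nonneg e) ht1
      simp [Set.indicator_of_notMem hx, image_eq_zero_of_notMem_tsupport hx']
  have hderiv : ∀ x, ∀ t ∈ ball (0 : ℝ) 1, HasDerivAt (fun s : ℝ => g x * ψ (x + s • e))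
      (g x * fderiv ℝ ψ (x + t • e) e) t := fun x t _ =>
    (((hψ.differentiable one_ne_zero) _).hasFDerivAt.comp_hasDerivAt t
      (((hasDerivAt_id t).smul_const e).const_add x)).const_mul (g x) |>.congr_deriv (by simp)
  simpa using (hasDerivAt_integral_of_dominated_loc_of_deriv_le (μ := μ)
    (ball_mem_nhds 0 one_pos)
    (Eventually.of_forall fun t => (hg.mul (hψ_shift t)).aestronglyMeasurable)
    (by simpa using (hg.mul hψ.continuous).integrable_of_hasCompactSupport hψs.mul_left)
    (hg.mul (((hψ.continuous_fderiv one_ne_zero).comp (continuous_add_const _)).clm_apply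
      continuous_const)).aestronglyMeasurable
    (Eventually.of_forall hbound)
    ((integrable_indicator_iff hS.measurableSet).2 (integrableOn_const hS.measure_lt_top.ne))
    (Eventually.of_forall hderiv)).2

lemma abs_integral_mul_fderiv_le {θ A L Lψ : ℝ} (hθ : 1 / 2 < θ) {g ψ : E → ℝ} {K : Set E}
    (hK : Bornology.IsBounded K) (hgA : ∀ x, |g x| ≤ A)
    (hgL : ∀ x y, |g x - g y| ≤ L * dist x y ^ θ) (hψ : ContDiff ℝ 1 ψ)
    (hψs : HasCompactSupport ψ) (hψK : tsupport ψ ⊆ K)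
    (hψL : ∀ x y, |ψ x - ψ y| ≤ Lψ * dist x y ^ θ) {e : E} (he : ‖e‖ = 1) :
    |∫ x, g x * fderiv ℝ ψ x e ∂μ| ≤
      (A + L / (2 * (2 ^ (2 * θ - 1) - 1))) * Lψ * μ.real (cthickening 1 K) := by
  set F : ℝ → ℝ := fun t => ∫ x, g x * ψ (x + t • e) ∂μ
  set V := μ.real (cthickening 1 K)
  have hB : μ (cthickening 1 K) < ⊤ := hK.cthickening.measure_lt_top
  have hg : Continuous g := continuous_of_abs_sub_le_mul_dist_rpow (by linarith) hgL
  have hψ0 : ∀ x ∉ cthickening 1 K, ψ x = 0 := fun x hx =>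
    image_eq_zero_of_notMem_tsupport fun h => hx (self_subset_cthickening K (hψK h))
  have hint_shift : ∀ h : E, Integrable (fun x => g x * ψ (x + h)) μ := fun h =>
    (hg.mul (hψ.continuous.comp (continuous_add_const h))).integrable_of_hasCompactSupport
      (hψs.comp_homeomorph (Homeomorph.addRight h)).mul_left
  have hfirst : |F 1 - F 0| ≤ A * Lψ * V := by
    have hF : F 1 - F 0 = ∫ x, g x * (ψ (x + e) - ψ x) ∂μ := by
      simp only [F, one_smul, zero_smul, add_zero, mul_sub]
      rw [integral_sub (hint_shift e) (by simpa using hint_shift 0)]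
    rw [hF]
    refine abs_integral_le_of_eq_zero_off hB (fun x hx => ?_) (fun x _ => ?_)
    · rw [comp_add_eq_zero_of_notMem_cthickening hψK he.le hx, hψ0 x hx, sub_self, mul_zero]
    · have hψe := hψL (x + e) x
      rw [dist_self_add_left, he, Real.one_rpow, mul_one] at hψe
      rw [abs_mul]
      exact mul_le_mul (hgA x) hψe (abs_nonneg _) ((abs_nonneg _).trans (hgA x))
  have hsecond : ∀ u, 0 < u → u ≤ 1 →
      |F (2 * u) - 2 * F u + F 0| ≤ L * Lψ * V * u ^ (1 + (2 * θ - 1)) := by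
    intro u hu0 hu1
    have hue : ‖u • e‖ = u := by rw [norm_smul, he, mul_one, Real.norm_of_nonneg hu0.le]
    simp only [F, zero_smul, add_zero]
    rw [show (2 * u) • e = u • e + u • e by rw [two_mul, add_smul],
      integral_mul_second_difference hg hψ.continuous hψs]
    refine (abs_integral_le_of_eq_zero_off (C := L * u ^ θ * (Lψ * u ^ θ)) hB (fun x hx => ?_)
      (fun x _ => ?_)).trans_eq ?_
    · rw [comp_add_eq_zero_of_notMem_cthickening hψK (by rw [hue]; exact hu1) hx, hψ0 x hx,
        sub_self, mul_zero]
    · have hgu := hgL (x - u • e) x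
      have hψu := hψL (x + u • e) x
      rw [dist_self_sub_left, hue] at hgu
      rw [dist_self_add_left, hue] at hψu
      rw [abs_mul]
      exact mul_le_mul hgu hψu (abs_nonneg _) ((abs_nonneg _).trans hgu)
    · rw [show 1 + (2 * θ - 1) = θ + θ by ring, Real.rpow_add hu0]
      ring
  have hd := abs_deriv_sub_sub_le_of_second_difference
    (hasDerivAt_integral_mul_comp_add_smul hg hψ hψs e) (by linarith) hsecond
  calc _ = |(F 1 - F 0) + (∫ x, g x * fderiv ℝ ψ x e ∂μ - (F 1 - F 0))| := by ring_nf
    _ ≤ A * Lψ * V + L * Lψ * V / (2 * (2 ^ (2 * θ - 1) - 1)) :=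
      (abs_add_le _ _).trans (add_le_add hfirst hd)
    _ = _ := by ring

lemma abs_setIntegral_fderiv_mul_mul_le {θ : ℝ} (hθ : 1 / 2 < θ) (hθ1 : θ ≤ 1) {U : Set E}
    (hUo : IsOpen U) (hUb : Bornology.IsBounded U) (hUne : U.Nonempty) {f w φ : E → ℝ}
    (hf : ContDiffOn ℝ 1 f U) (hw : ContDiffOn ℝ 1 w U) (hφ : ContDiff ℝ 1 φ)
    (hφs : HasCompactSupport φ) (hφU : tsupport φ ⊆ U) {Af Lf Aw Lw Aφ Lφ : ℝ}
    (hLf : 0 ≤ Lf) (hLw : 0 ≤ Lw) (hfA : ∀ x ∈ U, |f x| ≤ Af)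
    (hfL : ∀ x ∈ U, ∀ y ∈ U, |f x - f y| ≤ Lf * dist x y ^ θ) (hwA : ∀ x ∈ U, |w x| ≤ Aw)
    (hwL : ∀ x ∈ U, ∀ y ∈ U, |w x - w y| ≤ Lw * dist x y ^ θ) (hφA : ∀ x, |φ x| ≤ Aφ)
    (hφL : ∀ x y, |φ x - φ y| ≤ Lφ * dist x y ^ θ) {e : E} (he : ‖e‖ = 1) :
    |∫ x in U, fderiv ℝ f x e * w x * φ x ∂μ| ≤
      (Af + Lf / (2 * (2 ^ (2 * θ - 1) - 1))) * (Aw * Lφ + Aφ * Lw) *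
        μ.real (cthickening 1 U) := by
  obtain ⟨g, hgA, hgL, hfg⟩ :=
    exists_bounded_holder_extension hUne (by linarith) hθ1 hLf hfA hfL
  obtain ⟨w', hw'A, hw'L, hww'⟩ :=
    exists_bounded_holder_extension hUne (by linarith) hθ1 hLw hwA hwL
  set ψ := fun x => w x * φ x
  have hψU : tsupport ψ ⊆ U := tsupport_mul_subset_right.trans hφU
  have hψ : ContDiff ℝ 1 ψ := (hw.mul hφ.contDiffOn).contDiff_of_tsupport_subset hUo hψU
  have hψw' : ψ = fun x => w' x * φ x := funext fun x => by
    by_cases hx : x ∈ U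
    · simp only [ψ, hww' hx]
    · simp only [ψ, image_eq_zero_of_notMem_tsupport fun h => hx (hφU h), mul_zero]
  have hIBP : ∫ x in U, fderiv ℝ f x e * w x * φ x ∂μ = -∫ x, g x * fderiv ℝ ψ x e ∂μ :=
    calc _ = ∫ x in U, fderiv ℝ f x e * ψ x ∂μ := by simp only [ψ, mul_assoc]
      _ = -∫ x in U, f x * fderiv ℝ ψ x e ∂μ :=
        setIntegral_fderiv_mul_eq_neg hUo hf hψ hφs.mul_left hψU e
      _ = -∫ x in U, g x * fderiv ℝ ψ x e ∂μ := by
        congr 1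
        exact setIntegral_congr_fun hUo.measurableSet fun x hx => by simp only [hfg hx]
      _ = _ := by
        rw [setIntegral_eq_integral_of_forall_compl_eq_zero fun x hx => by
          rw [image_eq_zero_of_notMem_tsupport (f := fderiv ℝ ψ)
            fun h => hx (hψU (tsupport_fderiv_subset ℝ h)), zero_apply, mul_zero]]
  rw [hIBP, abs_neg]
  exact abs_integral_mul_fderiv_le hθ hUb hgA hgL hψ hφs.mul_left hψU
    (hψw' ▸ abs_mul_sub_mul_le_of_holder hw'A hφA hw'L hφL) he

end Translation

theorem statement5_general
    (n : ℕ) (θ : ℝ) (hθ : 1 / 2 < θ) (hθ1 : θ ≤ 1)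
    (Ω : Set (EuclideanSpace ℝ (Fin n))) (hΩo : IsOpen Ω)
    (hΩb : Bornology.IsBounded Ω) (hΩne : Ω.Nonempty) :
    ∃ C : ℝ, 0 < C ∧
      ∀ i : Fin n, ∀ f w φ : EuclideanSpace ℝ (Fin n) → ℝ,
        ContDiffOn ℝ 1 f (closure Ω) → ContDiffOn ℝ 1 w (closure Ω) →
        ContDiff ℝ 1 φ → HasCompactSupport φ → tsupport φ ⊆ Ω →
      ∀ Af Lf Aw Lw Aφ Lφ : ℝ,
        (∀ x ∈ Ω, |f x| ≤ Af) →
        (∀ x ∈ Ω, ∀ y ∈ Ω, |f x - f y| ≤ Lf * ‖x - y‖ ^ θ) →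
        (∀ x ∈ Ω, |w x| ≤ Aw) →
        (∀ x ∈ Ω, ∀ y ∈ Ω, |w x - w y| ≤ Lw * ‖x - y‖ ^ θ) →
        (∀ x, |φ x| ≤ Aφ) →
        (∀ x y : EuclideanSpace ℝ (Fin n), |φ x - φ y| ≤ Lφ * ‖x - y‖ ^ θ) →
      |∫ x in Ω, pd i f x * w x * φ x| ≤
        C * (Af + Lf) * (Aw + Lw) * (Aφ + Lφ) := by
  set c : ℝ := 1 / (2 * (2 ^ (2 * θ - 1) - 1))
  set V := volume.real (cthickening 1 Ω)
  have hc : 0 ≤ c := by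
    have : 1 ≤ (2 : ℝ) ^ (2 * θ - 1) := Real.one_le_rpow one_le_two (by linarith)
    positivity
  refine ⟨(1 + c) * V + 1, by positivity, ?_⟩
  intro i f w φ hf hw hφ hφs hφΩ Af Lf Aw Lw Aφ Lφ hfA hfL hwA hwL hφA hφL
  simp only [← dist_eq_norm] at hfL hwL hφL
  have : Nonempty (Fin n) := ⟨i⟩
  obtain ⟨x₀, hx₀⟩ := hΩne
  obtain ⟨y₀, ⟨hy₀, -⟩, hne⟩ :=
    preperfect_iff_nhds.1 PerfectSpace.univ_preperfect x₀ trivial Ω (hΩo.mem_nhds hx₀)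
  have hLf := nonneg_of_abs_sub_le_mul_dist_rpow hne (hfL y₀ hy₀ x₀ hx₀)
  have hLw := nonneg_of_abs_sub_le_mul_dist_rpow hne (hwL y₀ hy₀ x₀ hx₀)
  have hLφ := nonneg_of_abs_sub_le_mul_dist_rpow hne (hφL y₀ x₀)
  have hAf : 0 ≤ Af := (abs_nonneg _).trans (hfA x₀ hx₀)
  have hAw : 0 ≤ Aw := (abs_nonneg _).trans (hwA x₀ hx₀)
  have hAφ : 0 ≤ Aφ := (abs_nonneg _).trans (hφA x₀)
  have hV : 0 ≤ V := measureReal_nonneg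
  have hbound := abs_setIntegral_fderiv_mul_mul_le (μ := volume) hθ hθ1 hΩo hΩb ⟨x₀, hx₀⟩
    (hf.mono subset_closure) (hw.mono subset_closure) hφ hφs hφΩ hLf hLw hfA hfL hwA hwL hφA hφL
    (e := EuclideanSpace.single i 1) (by simp)
  calc |∫ x in Ω, pd i f x * w x * φ x| ≤ (Af + c * Lf) * (Aw * Lφ + Aφ * Lw) * V :=
        hbound.trans_eq (by simp only [c, V]; ring)
    _ ≤ ((1 + c) * (Af + Lf)) * ((Aw + Lw) * (Aφ + Lφ)) * V := by gcongr <;> nlinarith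
    _ ≤ _ := by
      nlinarith [mul_nonneg (add_nonneg hAf hLf)
        (mul_nonneg (add_nonneg hAw hLw) (add_nonneg hAφ hLφ))]

/-- For `n ≥ 1`, `θ ∈ (1/2,1]` and a bounded open set `Ω ⊆ ℝⁿ`, there is a
constant `C = C(n,θ,Ω)` such that for every `i`, all `f, w ∈ C¹(Ω̄)` and every `φ ∈ C¹_c(Ω)`,
`|∫_Ω ∂_i f · w · φ| ≤ C ‖f‖_{C^{0,θ}} ‖w‖_{C^{0,θ}} ‖φ‖_{C^{0,θ}}`; in particular the bound
does not involve the derivatives of `f`, `w`, `φ`. The `C^{0,θ}` norms are encoded via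
arbitrary admissible bounds (`sup ≤ A`, Hölder seminorm ≤ `L`). -/
theorem statement5
    (n : ℕ) (hn : 1 ≤ n) (θ : ℝ) (hθ : 1 / 2 < θ) (hθ1 : θ ≤ 1)
    (Ω : Set (EuclideanSpace ℝ (Fin n))) (hΩo : IsOpen Ω)
    (hΩb : Bornology.IsBounded Ω) (hΩne : Ω.Nonempty) :
    ∃ C : ℝ, 0 < C ∧
      ∀ i : Fin n, ∀ f w φ : EuclideanSpace ℝ (Fin n) → ℝ,
        ContDiffOn ℝ 1 f (closure Ω) → ContDiffOn ℝ 1 w (closure Ω) →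
        ContDiff ℝ 1 φ → HasCompactSupport φ → tsupport φ ⊆ Ω →
      ∀ Af Lf Aw Lw Aφ Lφ : ℝ,
        (∀ x ∈ Ω, |f x| ≤ Af) →
        (∀ x ∈ Ω, ∀ y ∈ Ω, |f x - f y| ≤ Lf * ‖x - y‖ ^ θ) →
        (∀ x ∈ Ω, |w x| ≤ Aw) →
        (∀ x ∈ Ω, ∀ y ∈ Ω, |w x - w y| ≤ Lw * ‖x - y‖ ^ θ) →
        (∀ x, |φ x| ≤ Aφ) →
        (∀ x y : EuclideanSpace ℝ (Fin n), |φ x - φ y| ≤ Lφ * ‖x - y‖ ^ θ) →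
      |∫ x in Ω, pd i f x * w x * φ x| ≤
        C * (Af + Lf) * (Aw + Lw) * (Aφ + Lφ) :=
  statement5_general n θ hθ hθ1 Ω hΩo hΩb hΩne
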